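/- arXiv:2002.05392 — 2 statements merged into one kernel-verified Lean document; each statement's English description precedes it below -/
import Mathlib

section
/- Let n ≥ 1, let p ∈ ℝ^n satisfy 0 ≤ p_1 ≤ p_2 ≤ ⋯ ≤ p_n ≤ 1, and let g ∈ ℝ^n be arbitrary. Then γ̃²(p,g) ≥ 0. -/
/-!
Put `p 0 = 0` and let `U` be uniform on `[0, 1]`. The indicators `X i = 1[U ≤ p i]` have
covariance `p (min i j) - p i * p j` because `p` is monotone, and for `i < j` this is
`p i * (1 - p j)`; so `γ̃²(p, g) = Var (∑ g i * X i) ≥ 0`. Concretely, `∑ g i * X i` takes the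
value `∑_{i ≥ k} g i` with probability `p k - p (k - 1)` and the value `0` with probability
`1 - p n`, and the variance bound is Cauchy–Schwarz for these weights.
-/

open Finset

theorem Finset.sum_sum_eq_sum_add_two_mul_sum_lt {ι R : Type*} [LinearOrder ι] [NonAssocSemiring R]
    (s : Finset ι) (f : ι → ι → R) (hf : ∀ i j, f i j = f j i) :
    ∑ i ∈ s, ∑ j ∈ s, f i j = ∑ i ∈ s, f i i + 2 * ∑ i ∈ s, ∑ j ∈ s with i < j, f i j := by
  have htri : ∀ i j, f i j = (if i < j then f i j else 0) + (if j < i then f i j else 0)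
      + (if i = j then f i j else 0) := by
    intro i j
    rcases lt_trichotomy i j with h | rfl | h
    · simp [h, h.ne, h.not_gt]
    · simp
    · simp [h, h.ne', h.not_gt]
  have hlower : ∑ i ∈ s, ∑ j ∈ s, (if j < i then f i j else 0)
      = ∑ i ∈ s, ∑ j ∈ s, (if i < j then f i j else 0) := by
    rw [sum_comm]
    simp_rw [hf]
  simp_rw [sum_filter, two_mul]
  conv_lhs => enter [2, i, 2, j]; rw [htri]
  simp only [sum_add_distrib, sum_ite_eq, hlower]
  rw [add_comm]
  exact congrArg (· + _) (sum_congr rfl fun i hi => if_pos hi)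

theorem sq_sum_mul_le_sum_mul_sq {ι R : Type*} [CommRing R] [LinearOrder R] [IsStrictOrderedRing R]
    (s : Finset ι) (w x : ι → R) (hw : ∀ i ∈ s, 0 ≤ w i) (hw1 : ∑ i ∈ s, w i ≤ 1) :
    (∑ i ∈ s, w i * x i) ^ 2 ≤ ∑ i ∈ s, w i * x i ^ 2 := by
  have hwx : 0 ≤ ∑ i ∈ s, w i * x i ^ 2 :=
    sum_nonneg fun i hi => mul_nonneg (hw i hi) (sq_nonneg _)
  calc (∑ i ∈ s, w i * x i) ^ 2 ≤ (∑ i ∈ s, w i) * ∑ i ∈ s, w i * x i ^ 2 :=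
        sum_sq_le_sum_mul_sum_of_sq_le_mul s hw (fun i hi => mul_nonneg (hw i hi) (sq_nonneg _))
          (fun i _ => le_of_eq (by ring))
    _ ≤ ∑ i ∈ s, w i * x i ^ 2 := mul_le_of_le_one_left hwx hw1

-- `p 0` is read as `0`: it is not part of the data `p 1, …, p n`.
noncomputable def increment (p : ℕ → ℝ) (k : ℕ) : ℝ := p k - if k = 1 then 0 else p (k - 1)

theorem sum_Icc_increment (p : ℕ → ℝ) {m : ℕ} (hm : 1 ≤ m) :
    ∑ k ∈ Icc 1 m, increment p k = p m := by
  induction m, hm using Nat.le_induction with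
  | base => simp [increment]
  | succ m hm ih =>
    rw [sum_Icc_succ_top (by omega), ih, increment, if_neg (by omega), Nat.add_sub_cancel]
    ring

theorem sum_Icc_ite_le_increment (p : ℕ → ℝ) {m n : ℕ} (hm : m ∈ Icc 1 n) :
    ∑ k ∈ Icc 1 n, (if k ≤ m then increment p k else 0) = p m := by
  rw [← sum_filter]
  have : {k ∈ Icc 1 n | k ≤ m} = Icc 1 m := by
    ext k; simp only [mem_filter, mem_Icc] at hm ⊢; omega
  rw [this, sum_Icc_increment p (mem_Icc.mp hm).1]

theorem increment_nonneg {p : ℕ → ℝ} {n k : ℕ} (hp1 : 0 ≤ p 1)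
    (hmono : ∀ i, 1 ≤ i → i < n → p i ≤ p (i + 1)) (hk : k ∈ Icc 1 n) :
    0 ≤ increment p k := by
  obtain ⟨hk1, hkn⟩ := mem_Icc.mp hk
  rcases hk1.eq_or_lt with rfl | hk1
  · simpa [increment] using hp1
  · obtain ⟨i, rfl⟩ : ∃ i, k = i + 1 := ⟨k - 1, by omega⟩
    rw [increment, if_neg (by omega), Nat.add_sub_cancel, sub_nonneg]
    exact hmono i (by omega) (by omega)

theorem sum_sum_min_sub_mul_mul_nonneg {p : ℕ → ℝ} {n : ℕ} (g : ℕ → ℝ) (hp1 : 0 ≤ p 1)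
    (hmono : ∀ i, 1 ≤ i → i < n → p i ≤ p (i + 1)) (hpn : p n ≤ 1) :
    0 ≤ ∑ i ∈ Icc 1 n, ∑ j ∈ Icc 1 n, (p (min i j) - p i * p j) * (g i * g j) := by
  set T : ℕ → ℝ := fun k => ∑ i ∈ Icc 1 n, if k ≤ i then g i else 0
  have hmean : ∑ k ∈ Icc 1 n, increment p k * T k = ∑ i ∈ Icc 1 n, p i * g i := by
    simp only [T, mul_sum]
    rw [sum_comm]
    refine sum_congr rfl fun i hi => ?_
    rw [← sum_Icc_ite_le_increment p hi, sum_mul]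
    refine sum_congr rfl fun k _ => ?_
    split_ifs <;> simp
  have hsecond : ∑ k ∈ Icc 1 n, increment p k * T k ^ 2
      = ∑ i ∈ Icc 1 n, ∑ j ∈ Icc 1 n, p (min i j) * (g i * g j) := by
    simp only [T, sq, sum_mul_sum]
    simp only [mul_sum]
    rw [sum_comm]
    refine sum_congr rfl fun i hi => ?_
    rw [sum_comm]
    refine sum_congr rfl fun j hj => ?_
    have hmin : min i j ∈ Icc 1 n := by simp only [mem_Icc] at hi hj ⊢; omega
    rw [← sum_Icc_ite_le_increment p hmin, sum_mul]
    refine sum_congr rfl fun k _ => ?_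
    simp only [le_min_iff]
    split_ifs <;> simp_all
  have hweights : ∑ k ∈ Icc 1 n, increment p k ≤ 1 := by
    rcases n.eq_zero_or_pos with rfl | hn
    · simp
    · rwa [sum_Icc_increment p hn]
  have hvar := sq_sum_mul_le_sum_mul_sq (Icc 1 n) (increment p) T
    (fun k hk => increment_nonneg hp1 hmono hk) hweights
  rw [hmean, hsecond] at hvar
  have hsplit : ∑ i ∈ Icc 1 n, ∑ j ∈ Icc 1 n, (p (min i j) - p i * p j) * (g i * g j)
      = ∑ i ∈ Icc 1 n, ∑ j ∈ Icc 1 n, p (min i j) * (g i * g j)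
        - (∑ i ∈ Icc 1 n, p i * g i) ^ 2 := by
    simp only [sq, sum_mul_sum, ← sum_sub_distrib]
    refine sum_congr rfl fun i _ => sum_congr rfl fun j _ => by ring
  linarith

theorem modified_gini_nonneg_general (n : ℕ) (p g : ℕ → ℝ)
    (hp1 : 0 ≤ p 1)
    (hmono : ∀ i, 1 ≤ i → i < n → p i ≤ p (i + 1))
    (hpn : p n ≤ 1) :
    0 ≤ (∑ i ∈ Finset.Icc 1 n, p i * (1 - p i) * (g i) ^ 2)
      + 2 * ∑ i ∈ Finset.Icc 1 n, ∑ j ∈ Finset.Icc (i + 1) n,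
          p i * (1 - p j) * (g i * g j) := by
  have hupper : ∀ i ∈ Icc 1 n, {j ∈ Icc 1 n | i < j} = Icc (i + 1) n := fun i hi => by
    ext j; simp only [mem_filter, mem_Icc] at hi ⊢; omega
  calc 0 ≤ ∑ i ∈ Icc 1 n, ∑ j ∈ Icc 1 n, (p (min i j) - p i * p j) * (g i * g j) :=
        sum_sum_min_sub_mul_mul_nonneg g hp1 hmono hpn
    _ = ∑ i ∈ Icc 1 n, (p (min i i) - p i * p i) * (g i * g i)
          + 2 * ∑ i ∈ Icc 1 n, ∑ j ∈ Icc 1 n with i < j, (p (min i j) - p i * p j) * (g i * g j) :=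
        sum_sum_eq_sum_add_two_mul_sum_lt _ _ fun i j => by rw [min_comm]; ring
    _ = _ := by
      congr 1
      · exact sum_congr rfl fun i _ => by rw [min_self]; ring
      · congr 1
        refine sum_congr rfl fun i hi => ?_
        rw [hupper i hi]
        refine sum_congr rfl fun j hj => ?_
        rw [min_eq_left (by simp only [mem_Icc] at hj; omega)]
        ring

/-- Nonnegativity of the modified Gini-weighted smoothness: for `0 ≤ p₁ ≤ ⋯ ≤ pₙ ≤ 1`
and any `g ∈ ℝⁿ`, `γ̃²(p,g) ≥ 0`. -/
theorem modified_gini_nonneg (n : ℕ) (hn : 1 ≤ n) (p g : ℕ → ℝ)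
    (hp1 : 0 ≤ p 1)
    (hmono : ∀ i, 1 ≤ i → i < n → p i ≤ p (i + 1))
    (hpn : p n ≤ 1) :
    0 ≤ (∑ i ∈ Finset.Icc 1 n, p i * (1 - p i) * (g i) ^ 2)
      + 2 * ∑ i ∈ Finset.Icc 1 n, ∑ j ∈ Finset.Icc (i + 1) n,
          p i * (1 - p j) * (g i * g j) :=
  modified_gini_nonneg_general n p g hp1 hmono hpn
end

section
/- Let n ≥ 1, let p ∈ ℝ^n satisfy 0 = p_0 < p_1 < ⋯ < p_n < 1, and define ε ∈ ℝ^n by ε_j = √(p_j(1−p_j)) − √(p_{j−1}(1−p_{j−1})). Then εᵀ B_KL(p) ε ≤ 3 + ln(1/p_1) + ln(1/(1−p_n)); that is, ∑_{j=1}^n (√(p_j(1−p_j)) − √(p_{j−1}(1−p_{j−1})))²/(p_j − p_{j−1}) + p_n ≤ 3 + ln(1/p_1) + ln(1/(1−p_n)). -/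
/-!
Write `σ x = √(x (1 - x))`. The identity `(σ b - σ a) (σ a + σ b) = (b - a) (1 - a - b)`, together
with `|1 - a - b| ≤ max (1 - b) a`, gives `(σ b - σ a)² / (b - a) ≤ (b - a) ((1 - b) / b + a / (1 - a))`
for `a, b ∈ (0, 1)`. With `(b - a) / b ≤ log (b / a)`, applied to `a, b` and to `1 - b, 1 - a`, each
summand for `j ≥ 2` plus its share `p j - p (j - 1)` of `p n` is at most the increment of
`logit x = log x - log (1 - x)`. The summand `j = 1` is `1 - p 1`, so the left side is at most
`1 + logit (p n) - logit (p 1) ≤ 1 + log (1 / p 1) + log (1 / (1 - p n))`.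
-/

open Real Finset

noncomputable def bernoulliStd (x : ℝ) : ℝ := √(x * (1 - x))

noncomputable def logit (x : ℝ) : ℝ := log x - log (1 - x)

section
variable {a b : ℝ}

lemma bernoulliStd_sq (ha₀ : 0 ≤ a) (ha₁ : a ≤ 1) : bernoulliStd a ^ 2 = a * (1 - a) :=
  sq_sqrt (mul_nonneg ha₀ (by linarith))

lemma bernoulliStd_pos (ha₀ : 0 < a) (ha₁ : a < 1) : 0 < bernoulliStd a :=
  sqrt_pos.2 (mul_pos ha₀ (by linarith))

lemma sq_one_sub_add_le_mul_sq_bernoulliStd_add (ha₀ : 0 < a) (ha₁ : a < 1) (hb₀ : 0 < b)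
    (hb₁ : b < 1) :
    (1 - a - b) ^ 2 ≤ ((1 - b) / b + a / (1 - a)) * (bernoulliStd a + bernoulliStd b) ^ 2 := by
  have hσa := bernoulliStd_pos ha₀ ha₁
  have hσb := bernoulliStd_pos hb₀ hb₁
  rcases le_total a (1 - b) with h | h
  · calc (1 - a - b) ^ 2 ≤ (1 - b) ^ 2 := by nlinarith
      _ = (1 - b) / b * bernoulliStd b ^ 2 := by
        rw [bernoulliStd_sq hb₀.le hb₁.le]; field_simp
      _ ≤ (1 - b) / b * (bernoulliStd a + bernoulliStd b) ^ 2 := by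
        gcongr; linarith
      _ ≤ _ := by gcongr; exact le_add_of_nonneg_right (by bound)
  · calc (1 - a - b) ^ 2 ≤ a ^ 2 := by nlinarith
      _ = a / (1 - a) * bernoulliStd a ^ 2 := by
        rw [bernoulliStd_sq ha₀.le ha₁.le]; field_simp [(by linarith : 1 - a ≠ 0)]
      _ ≤ a / (1 - a) * (bernoulliStd a + bernoulliStd b) ^ 2 := by
        gcongr; linarith
      _ ≤ _ := by gcongr; exact le_add_of_nonneg_left (by bound)

lemma bernoulliStd_sub_sq_le (ha₀ : 0 < a) (ha₁ : a < 1) (hb₀ : 0 < b) (hb₁ : b < 1) :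
    (bernoulliStd b - bernoulliStd a) ^ 2 ≤ (b - a) ^ 2 * ((1 - b) / b + a / (1 - a)) := by
  have hpos : 0 < bernoulliStd a + bernoulliStd b :=
    add_pos (bernoulliStd_pos ha₀ ha₁) (bernoulliStd_pos hb₀ hb₁)
  have hdiff : bernoulliStd b - bernoulliStd a
      = (b - a) * (1 - a - b) / (bernoulliStd a + bernoulliStd b) := by
    rw [eq_div_iff hpos.ne']
    linear_combination bernoulliStd_sq hb₀.le hb₁.le - bernoulliStd_sq ha₀.le ha₁.le
  rw [hdiff, div_pow, div_le_iff₀ (by positivity), mul_pow, mul_assoc]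
  exact mul_le_mul_of_nonneg_left
    (sq_one_sub_add_le_mul_sq_bernoulliStd_add ha₀ ha₁ hb₀ hb₁) (sq_nonneg _)

lemma sub_div_le_log_sub_log (ha : 0 < a) (hb : 0 < b) : (b - a) / b ≤ log b - log a := by
  have h := one_sub_inv_le_log_of_pos (div_pos hb ha)
  rwa [log_div hb.ne' ha.ne', inv_div, one_sub_div hb.ne'] at h

lemma bernoulliStd_sub_sq_div_add_le_logit_sub (ha₀ : 0 < a) (hab : a < b) (hb₁ : b < 1) :
    (bernoulliStd b - bernoulliStd a) ^ 2 / (b - a) + (b - a) ≤ logit b - logit a := by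
  have hb₀ : 0 < b := ha₀.trans hab
  have ha₁ : a < 1 := hab.trans hb₁
  have hba : 0 < b - a := sub_pos.2 hab
  have hquot : (bernoulliStd b - bernoulliStd a) ^ 2 / (b - a)
      ≤ (b - a) * ((1 - b) / b + a / (1 - a)) := by
    rw [div_le_iff₀ hba]
    linear_combination bernoulliStd_sub_sq_le ha₀ ha₁ hb₀ hb₁
  have hlog := sub_div_le_log_sub_log ha₀ hb₀
  have hlog₁ := sub_div_le_log_sub_log (sub_pos.2 hb₁) (sub_pos.2 ha₁)
  have hsplit : (b - a) * ((1 - b) / b + a / (1 - a)) + (b - a)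
      = (b - a) / b + ((1 - a) - (1 - b)) / (1 - a) - (b - a) := by
    field_simp [(sub_pos.2 ha₁).ne']
    ring
  unfold logit
  linarith

lemma logit_sub_logit_le (ha₀ : 0 ≤ a) (ha₁ : a ≤ 1) (hb₀ : 0 ≤ b) (hb₁ : b ≤ 1) :
    logit b - logit a ≤ log (1 / a) + log (1 / (1 - b)) := by
  rw [logit, logit, one_div, log_inv, one_div, log_inv]
  linarith [log_nonpos hb₀ hb₁, log_nonpos (sub_nonneg.2 ha₁) (by linarith : 1 - a ≤ 1)]

end

lemma sum_Icc_one_eq_add_sum_range {M : Type*} [AddCommMonoid M] (f : ℕ → M) (m : ℕ) :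
    ∑ j ∈ Icc 1 (m + 1), f j = f 1 + ∑ i ∈ range m, f (i + 1 + 1) := by
  rw [← Ico_add_one_right_eq_Icc, sum_Ico_eq_sum_range, Nat.add_sub_cancel, sum_range_succ',
    add_comm]
  exact congrArg₂ _ rfl (sum_congr rfl fun k _ ↦ congrArg f (by omega))

lemma sum_bernoulliStd_sub_sq_div_add_le_logit_sub {q : ℕ → ℝ} {m : ℕ}
    (hq : StrictMonoOn q (Set.Iic m)) (hq₀ : 0 < q 0) (hqm : q m < 1) :
    ∑ i ∈ range m, ((bernoulliStd (q (i + 1)) - bernoulliStd (q i)) ^ 2 / (q (i + 1) - q i)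
      + (q (i + 1) - q i)) ≤ logit (q m) - logit (q 0) := by
  rw [← sum_range_sub (fun i ↦ logit (q i))]
  refine sum_le_sum fun i hi ↦ ?_
  have hi : i + 1 ≤ m := mem_range.1 hi
  exact bernoulliStd_sub_sq_div_add_le_logit_sub
    (hq₀.trans_le <|
      hq.monotoneOn (Set.mem_Iic.2 (Nat.zero_le m)) (Set.mem_Iic.2 (by omega)) (Nat.zero_le i))
    (hq (Set.mem_Iic.2 (by omega)) (Set.mem_Iic.2 hi) i.lt_succ_self)
    ((hq.monotoneOn (Set.mem_Iic.2 hi) Set.self_mem_Iic hi).trans_lt hqm)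

/-- Quadratic-form bound for the L1-optimal perturbation: for `0 = p₀ < p₁ < ⋯ < pₙ < 1`
and `εⱼ = √(pⱼ(1−pⱼ)) − √(pⱼ₋₁(1−pⱼ₋₁))`,
`εᵀ B_KL(p) ε = ∑ⱼ εⱼ²/(pⱼ−pⱼ₋₁) + pₙ ≤ 3 + ln(1/p₁) + ln(1/(1−pₙ))`. -/
theorem quadForm_sqrt_perturbation_le (n : ℕ) (hn : 1 ≤ n) (p : ℕ → ℝ)
    (hp0 : p 0 = 0)
    (hmono : ∀ i, i < n → p i < p (i + 1))
    (hpn : p n < 1) :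
    (∑ j ∈ Finset.Icc 1 n,
        (Real.sqrt (p j * (1 - p j)) - Real.sqrt (p (j - 1) * (1 - p (j - 1)))) ^ 2
          / (p j - p (j - 1)))
      + p n
    ≤ 3 + Real.log (1 / p 1) + Real.log (1 / (1 - p n)) := by
  obtain ⟨m, rfl⟩ : ∃ m, n = m + 1 := ⟨n - 1, by omega⟩
  have hp : StrictMonoOn p (Set.Iic (m + 1)) :=
    strictMonoOn_Iic_of_lt_succ (by simpa only [Order.succ_eq_add_one] using hmono)
  have hp₁ : 0 < p 1 := hp0 ▸ hp (by simp) (by simp) zero_lt_one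
  have hq : StrictMonoOn (fun i ↦ p (i + 1)) (Set.Iic m) := fun i hi j hj hij ↦
    hp (Nat.succ_le_succ hi) (Nat.succ_le_succ hj) (Nat.succ_lt_succ hij)
  change (∑ j ∈ Icc 1 (m + 1), (bernoulliStd (p j) - bernoulliStd (p (j - 1))) ^ 2
      / (p j - p (j - 1))) + p (m + 1) ≤ _
  have hp₁ₙ : p 1 ≤ p (m + 1) := hp.monotoneOn (by simp) Set.self_mem_Iic (by omega)
  set T : ℕ → ℝ := fun j ↦ (bernoulliStd (p j) - bernoulliStd (p (j - 1))) ^ 2 / (p j - p (j - 1))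
  have hT₁ : T 1 = 1 - p 1 := by
    simp only [T, Nat.sub_self, hp0, sub_zero]
    rw [show bernoulliStd 0 = 0 by simp [bernoulliStd], sub_zero,
      bernoulliStd_sq hp₁.le (by linarith), mul_div_cancel_left₀ _ hp₁.ne']
  have hpm : p (m + 1) = p 1 + ∑ i ∈ range m, (p (i + 1 + 1) - p (i + 1)) := by
    rw [sum_range_sub (fun i ↦ p (i + 1))]; ring
  have hbound := sum_bernoulliStd_sub_sq_div_add_le_logit_sub hq hp₁ hpn
  calc (∑ j ∈ Icc 1 (m + 1), T j) + p (m + 1)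
      = 1 + ∑ i ∈ range m, (T (i + 1 + 1) + (p (i + 1 + 1) - p (i + 1))) := by
        rw [sum_Icc_one_eq_add_sum_range, hT₁, hpm, sum_add_distrib]; ring
    _ ≤ 1 + (logit (p (m + 1)) - logit (p 1)) := by
        simpa only [T, Nat.add_sub_cancel, add_le_add_iff_left] using hbound
    _ ≤ 3 + log (1 / p 1) + log (1 / (1 - p (m + 1))) := by
        linarith [logit_sub_logit_le hp₁.le (by linarith) (by linarith) hpn.le]
end
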